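/- arXiv:0806.2871 — 2 statements merged into one kernel-verified Lean document; each statement's English description precedes it below -/
import Mathlib

section
/- For every constant c > 0 there exists δ > 0 such that every complex number z with Re z ≤ 0 and |Im z| ≤ c·|Re z| satisfies |1 + e^z| ≥ δ. (In other words, |1 + e^z| is bounded from below on any closed cone directed by the negative real axis.) -/
/-! Where `Re z ≤ -log 2` we have `|e^z| ≤ 1/2`, so `|1 + e^z| ≥ 1/2`. The remaining part of the
cone, `-log 2 ≤ Re z ≤ 0`, is compact, and `1 + e^z` has no zero there: `e^z = -1` forces `Re z = 0`,
and the only point of the cone on the imaginary axis is `0`, where `1 + e^0 = 2`. -/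

open Complex

theorem IsCompact.exists_pos_le_norm {X E : Type*} [TopologicalSpace X] [NormedAddGroup E]
    {K : Set X} (hK : IsCompact K) {f : X → E} (hf : ContinuousOn f K)
    (hf₀ : ∀ x ∈ K, f x ≠ 0) : ∃ δ > 0, ∀ x ∈ K, δ ≤ ‖f x‖ := by
  rcases K.eq_empty_or_nonempty with rfl | hne
  · exact ⟨1, one_pos, by simp⟩
  obtain ⟨x₀, hx₀, hmin⟩ := hK.exists_isMinOn hne hf.norm
  exact ⟨‖f x₀‖, norm_pos_iff.2 (hf₀ x₀ hx₀), fun x hx => hmin hx⟩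

theorem Complex.isCompact_setOf_abs_re_le_and_abs_im_le (a c : ℝ) :
    IsCompact {z : ℂ | |z.re| ≤ a ∧ |z.im| ≤ c * |z.re|} := by
  have hclosed : IsClosed {z : ℂ | |z.re| ≤ a ∧ |z.im| ≤ c * |z.re|} := by
    simp only [Set.ofPred_and]
    exact (isClosed_le (by fun_prop) continuous_const).inter
      (isClosed_le (by fun_prop) (by fun_prop))
  have hsub : {z : ℂ | |z.re| ≤ a ∧ |z.im| ≤ c * |z.re|} ⊆
      Set.Icc (-a) a ×ℂ Set.Icc (-(|c| * a)) (|c| * a) := by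
    rintro z ⟨hre, him⟩
    have him' : |z.im| ≤ |c| * a :=
      him.trans ((mul_le_mul_of_nonneg_right (le_abs_self c) (abs_nonneg _)).trans
        (mul_le_mul_of_nonneg_left hre (abs_nonneg c)))
    exact ⟨abs_le.1 hre, abs_le.1 him'⟩
  exact (isCompact_Icc.reProdIm isCompact_Icc).of_isClosed_subset hclosed hsub

theorem Complex.one_add_exp_ne_zero_of_abs_im_le {z : ℂ} {c : ℝ} (h : |z.im| ≤ c * |z.re|) :
    1 + exp z ≠ 0 := by
  intro h₀
  have hre : z.re = 0 := by
    have h₁ := congrArg norm (eq_neg_of_add_eq_zero_right h₀)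
    rwa [Complex.norm_exp, norm_neg, norm_one, Real.exp_eq_one_iff] at h₁
  have him : z.im = 0 := abs_nonpos_iff.1 (by simpa [hre] using h)
  have hz : z = 0 := Complex.ext hre him
  rw [hz, exp_zero] at h₀
  norm_num at h₀

theorem Complex.half_le_norm_one_add_exp_of_re_le {z : ℂ} (hz : z.re ≤ -Real.log 2) :
    1 / 2 ≤ ‖1 + exp z‖ := by
  have hexp : ‖exp z‖ ≤ 1 / 2 := by
    rw [Complex.norm_exp]
    calc Real.exp z.re ≤ Real.exp (-Real.log 2) := Real.exp_le_exp.2 hz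
      _ = 1 / 2 := by rw [Real.exp_neg, Real.exp_log two_pos, one_div]
  have htri := norm_sub_le_norm_add (1 : ℂ) (exp z)
  rw [norm_one] at htri
  linarith

theorem abs_one_add_exp_lower_bound_on_cone_general (c : ℝ) :
    ∃ δ > 0, ∀ z : ℂ, z.re ≤ 0 → |z.im| ≤ c * |z.re| →
      δ ≤ ‖1 + Complex.exp z‖ := by
  obtain ⟨δ, hδ, hnear⟩ :=
    (isCompact_setOf_abs_re_le_and_abs_im_le (Real.log 2) c).exists_pos_le_norm
      (continuous_const.add continuous_exp).continuousOn
      fun z hz => one_add_exp_ne_zero_of_abs_im_le hz.2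
  refine ⟨min (1 / 2) δ, by positivity, fun z hre him => ?_⟩
  rcases le_or_gt z.re (-Real.log 2) with hfar | hclose
  · exact (min_le_left _ _).trans (half_le_norm_one_add_exp_of_re_le hfar)
  · exact (min_le_right _ _).trans
      (hnear z ⟨abs_le.2 ⟨hclose.le, hre.trans (Real.log_nonneg one_le_two)⟩, him⟩)

/-- For every constant `c > 0` there exists `δ > 0` such that every complex number `z`
with `Re z ≤ 0` and `|Im z| ≤ c·|Re z|` satisfies `|1 + e^z| ≥ δ`. -/
theorem abs_one_add_exp_lower_bound_on_cone (c : ℝ) (hc : 0 < c) :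
    ∃ δ > 0, ∀ z : ℂ, z.re ≤ 0 → |z.im| ≤ c * |z.re| →
      δ ≤ ‖1 + Complex.exp z‖ :=
  abs_one_add_exp_lower_bound_on_cone_general c
end

section
/- For every natural number n ≥ 1 there exists a constant C > 0 with the following property. For every p ∈ ℂⁿ, every ε with 0 < ε ≤ 1, and every function v : ℂⁿ → ℂ of class C¹ (with respect to the real structure), one has |v(p)| ≤ C·( ε · sup_{z ∈ B̄(p,ε)} ‖∂̄v(z)‖ + ε^{−n} · (∫_{B(p,ε)} |v|² dλ)^{1/2} ), where B(p,ε) is the euclidean ball of radius ε, B̄(p,ε) its closure, and λ Lebesgue measure on ℂⁿ ≅ ℝ^{2n}. -/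
open MeasureTheory Metric

noncomputable instance (n : ℕ) : MeasurableSpace (EuclideanSpace ℂ (Fin n)) := borel _

instance (n : ℕ) : BorelSpace (EuclideanSpace ℂ (Fin n)) := ⟨rfl⟩

/-- Lebesgue measure on `ℂⁿ ≅ ℝ^{2n}`. -/
noncomputable instance (n : ℕ) : MeasureSpace (EuclideanSpace ℂ (Fin n)) :=
  letI : InnerProductSpace ℝ (EuclideanSpace ℂ (Fin n)) := InnerProductSpace.rclikeToReal ℂ _
  measureSpaceOfInnerProductSpace

/-- The (0,1)-part of the real derivative of `v : ℂⁿ → ℂ` at `z`, as an ℝ-linear map: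
`∂̄v(z)(w) = ½( Dv(z)(w) + i·Dv(z)(i·w) )`. -/
noncomputable def dbar {n : ℕ} (v : EuclideanSpace ℂ (Fin n) → ℂ)
    (z : EuclideanSpace ℂ (Fin n)) : EuclideanSpace ℂ (Fin n) →L[ℝ] ℂ :=
  (1 / 2 : ℝ) • (fderiv ℝ v z +
    (ContinuousLinearMap.restrictScalars ℝ
        ((Complex.I : ℂ) • ContinuousLinearMap.id ℂ ℂ)).comp
      ((fderiv ℝ v z).comp
        (ContinuousLinearMap.restrictScalars ℝ
          ((Complex.I : ℂ) • ContinuousLinearMap.id ℂ (EuclideanSpace ℂ (Fin n))))))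

/-!
Restrict `v` to the complex lines through `p`. In polar coordinates `(t, θ) ↦ v (p + t e^{iθ} w)`
one has `t ∂ₜ + i ∂_θ = 2t ∂̄v(·)(e^{iθ} w)`, and `∂_θ` integrates to zero over a period, so the
mean of `v` over the circle `{p + e^{iθ} w}` differs from `v p` by at most `2 ‖w‖ sup ‖∂̄v‖`.
Multiplication by `e^{iθ}` preserves Lebesgue measure, so averaging these circle means over
`w ∈ B(0, ε)` gives the mean of `v` over `B(p, ε)`, which is then within `2 ε sup ‖∂̄v‖` of `v p`.
Finally Jensen bounds the mean by the `L²` norm divided by `√|B(p, ε)| = ε^n √|B(0, 1)|`.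
-/

open Real
open Complex (I)

lemma Continuous.integrableOn_ball {X E : Type*} [PseudoMetricSpace X] [ProperSpace X]
    [MeasurableSpace X] [OpensMeasurableSpace X] {μ : Measure X} [IsLocallyFiniteMeasure μ]
    [NormedAddCommGroup E] {g : X → E} (hg : Continuous g) (p : X) (ε : ℝ) :
    IntegrableOn g (ball p ε) μ :=
  (hg.locallyIntegrable.integrableOn_isCompact (isCompact_closedBall p ε)).mono_set
    ball_subset_closedBall

lemma IsCompact.le_biSup_of_continuousOn {X α : Type*} [TopologicalSpace X]
    [ConditionallyCompleteLinearOrder α] [TopologicalSpace α] [ClosedIciTopology α] {s : Set X}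
    (hs : IsCompact s) {f : X → α} (hf : ContinuousOn f s) {z : X} (hz : z ∈ s) :
    f z ≤ ⨆ x ∈ s, f x :=
  le_ciSup₂ (f := fun x (_ : x ∈ s) => f x) ((hs.bddAbove_image hf).mono
    (Set.iUnion_subset fun _ => Set.range_subset_iff.2 fun hx => Set.mem_image_of_mem f hx)) z hz

theorem norm_setAverage_le_sqrt_setAverage_norm_sq {α E : Type*} [MeasurableSpace α]
    {μ : Measure α} [NormedAddCommGroup E] [NormedSpace ℝ E] [CompleteSpace E] {s : Set α}
    {f : α → E} (h0 : μ s ≠ 0) (hs : μ s ≠ ⊤) (hf : IntegrableOn f s μ)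
    (hf2 : IntegrableOn (fun x => ‖f x‖ ^ 2) s μ) :
    ‖⨍ x in s, f x ∂μ‖ ≤ √(⨍ x in s, ‖f x‖ ^ 2 ∂μ) := by
  have hjensen := (convexOn_univ_norm.pow (fun x _ => norm_nonneg x) 2).map_set_average_le
    (continuous_norm.pow 2).continuousOn isClosed_univ h0 hs
    (Filter.Eventually.of_forall fun _ => Set.mem_univ _) hf hf2
  simpa using Real.abs_le_sqrt hjensen

lemma setIntegral_ball_zero_comp_add {G F : Type*} [NormedAddCommGroup G] [MeasurableSpace G]
    [BorelSpace G] [NormedAddCommGroup F] [NormedSpace ℝ F] (μ : Measure G) [μ.IsAddLeftInvariant]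
    (p : G) (g : G → F) (ε : ℝ) :
    ∫ w in ball 0 ε, g (p + w) ∂μ = ∫ z in ball p ε, g z ∂μ := by
  have hpre : (p + ·) ⁻¹' ball p ε = ball 0 ε := by
    ext w
    simp [dist_eq_norm]
  rw [← hpre]
  exact (measurePreserving_add_left μ p).setIntegral_preimage_emb
    (Homeomorph.addLeft p).measurableEmbedding g _

section EuclideanSpace

variable {n : ℕ}

theorem measureReal_ball_eq_pow_mul_measureReal_ball_one (p : EuclideanSpace ℂ (Fin n)) {ε : ℝ}
    (hε : 0 < ε) :
    volume.real (ball p ε) = ε ^ (2 * n) * volume.real (ball (0 : EuclideanSpace ℂ (Fin n)) 1) := by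
  let _ : InnerProductSpace ℝ (EuclideanSpace ℂ (Fin n)) := InnerProductSpace.rclikeToReal ℂ _
  have hfinrank : Module.finrank ℝ (EuclideanSpace ℂ (Fin n)) = 2 * n := by
    rw [← Module.finrank_mul_finrank ℝ ℂ, Complex.finrank_real_complex, finrank_euclideanSpace_fin]
  rw [measureReal_def, Measure.addHaar_ball_of_pos _ _ hε, hfinrank, ENNReal.toReal_mul,
    ENNReal.toReal_ofReal (by positivity), measureReal_def]

variable {F : Type*} [NormedAddCommGroup F] [NormedSpace ℝ F]

lemma setIntegral_ball_zero_comp_smul {c : ℂ} (hc : ‖c‖ = 1)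
    (g : EuclideanSpace ℂ (Fin n) → F) (ε : ℝ) :
    ∫ w in ball 0 ε, g (c • w) = ∫ w in ball (0 : EuclideanSpace ℂ (Fin n)) ε, g w := by
  let _ : InnerProductSpace ℝ (EuclideanSpace ℂ (Fin n)) := InnerProductSpace.rclikeToReal ℂ _
  let rotation : EuclideanSpace ℂ (Fin n) ≃ₗᵢ[ℝ] EuclideanSpace ℂ (Fin n) :=
    { (LinearEquiv.smulOfNeZero ℂ _ c (norm_ne_zero_iff.mp (hc ▸ one_ne_zero))).restrictScalars ℝ
      with norm_map' := fun w => by simp [norm_smul, hc] }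
  have hpre : rotation ⁻¹' ball 0 ε = ball 0 ε := by
    ext w
    simp [rotation, norm_smul, hc]
  nth_rewrite 1 [← hpre]
  exact rotation.measurePreserving.setIntegral_preimage_emb
    rotation.toHomeomorph.measurableEmbedding g _

theorem setIntegral_ball_circleAverage_comp_smul [CompleteSpace F]
    {g : EuclideanSpace ℂ (Fin n) → F} (hg : Continuous g) (ε : ℝ) :
    ∫ w in ball 0 ε, circleAverage (fun ζ => g (ζ • w)) 0 1 =
      ∫ w in ball (0 : EuclideanSpace ℂ (Fin n)) ε, g w := by
  have hint : Integrable (Function.uncurry fun θ w => g (circleMap 0 1 θ • w))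
      ((volume.restrict (Set.uIoc 0 (2 * π))).prod (volume.restrict (ball 0 ε))) := by
    rw [Measure.prod_restrict]
    have := continuous_circleMap 0 1
    exact (Continuous.continuousOn (by fun_prop)).integrableOn_compact
      (isCompact_uIcc.prod (isCompact_closedBall 0 ε)) |>.mono_set
      (Set.prod_mono Set.uIoc_subset_uIcc ball_subset_closedBall)
  simp only [circleAverage_def]
  rw [integral_smul, ← intervalIntegral_integral_swap hint]
  simp only [setIntegral_ball_zero_comp_smul (norm_circleMap_zero 1 _ ▸ abs_one),
    intervalIntegral.integral_const, sub_zero, smul_smul]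
  rw [inv_mul_cancel₀ (by positivity), one_smul]

end EuclideanSpace

variable {n : ℕ} {v : EuclideanSpace ℂ (Fin n) → ℂ}

lemma two_mul_dbar_apply (v : EuclideanSpace ℂ (Fin n) → ℂ) (z u : EuclideanSpace ℂ (Fin n)) :
    2 * dbar v z u = fderiv ℝ v z u + I * fderiv ℝ v z (I • u) := by
  simp [dbar]
  ring

lemma continuous_dbar (hv : ContDiff ℝ 1 v) : Continuous (dbar v) := by
  have := hv.continuous_fderiv one_ne_zero
  unfold dbar
  fun_prop

section Circle

variable (p w : EuclideanSpace ℂ (Fin n))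

lemma hasDerivAt_polar_radius (hv : Differentiable ℝ v) (t θ : ℝ) :
    HasDerivAt (fun t : ℝ => v (p + t • circleMap 0 1 θ • w))
      (fderiv ℝ v (p + t • circleMap 0 1 θ • w) (circleMap 0 1 θ • w)) t := by
  refine (hv _).hasFDerivAt.comp_hasDerivAt t ?_
  simpa using ((hasDerivAt_id t).smul_const (circleMap 0 1 θ • w)).const_add p

lemma hasDerivAt_polar_angle (hv : Differentiable ℝ v) (t θ : ℝ) :
    HasDerivAt (fun θ : ℝ => v (p + t • circleMap 0 1 θ • w))
      (t • fderiv ℝ v (p + t • circleMap 0 1 θ • w) (I • circleMap 0 1 θ • w)) θ := by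
  have h : HasDerivAt (fun θ : ℝ => p + t • circleMap 0 1 θ • w)
      (t • (circleMap 0 1 θ * I) • w) θ :=
    (((hasDerivAt_circleMap 0 1 θ).smul_const w).const_smul t).const_add p
  refine ((hv _).hasFDerivAt.comp_hasDerivAt θ h).congr_deriv ?_
  rw [mul_comm, mul_smul, ContinuousLinearMap.map_smul]

lemma integral_fderiv_I_smul_circle_eq_zero (hv : ContDiff ℝ 1 v) {t : ℝ} (ht : t ≠ 0) :
    ∫ θ in 0..2 * π, fderiv ℝ v (p + t • circleMap 0 1 θ • w) (I • circleMap 0 1 θ • w) = 0 := by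
  have hcont : Continuous fun θ : ℝ =>
      t • fderiv ℝ v (p + t • circleMap 0 1 θ • w) (I • circleMap 0 1 θ • w) := by
    have := hv.continuous_fderiv one_ne_zero
    have := continuous_circleMap 0 1
    fun_prop
  have hftc := intervalIntegral.integral_eq_sub_of_hasDerivAt
    (fun θ _ => hasDerivAt_polar_angle p w (hv.differentiable one_ne_zero) t θ)
    (hcont.intervalIntegrable 0 (2 * π))
  rw [intervalIntegral.integral_smul, (periodic_circleMap 0 1).eq, sub_self] at hftc
  exact (smul_eq_zero.mp hftc).resolve_left ht

lemma integral_fderiv_circle_eq_two_mul_integral_dbar (hv : ContDiff ℝ 1 v) {t : ℝ}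
    (ht : t ≠ 0) :
    ∫ θ in 0..2 * π, fderiv ℝ v (p + t • circleMap 0 1 θ • w) (circleMap 0 1 θ • w) =
      2 * ∫ θ in 0..2 * π, dbar v (p + t • circleMap 0 1 θ • w) (circleMap 0 1 θ • w) := by
  have := hv.continuous_fderiv one_ne_zero
  have := continuous_dbar hv
  have := continuous_circleMap 0 1
  have hsplit : ∀ θ : ℝ, fderiv ℝ v (p + t • circleMap 0 1 θ • w) (circleMap 0 1 θ • w) =
      2 * dbar v (p + t • circleMap 0 1 θ • w) (circleMap 0 1 θ • w) -
        I * fderiv ℝ v (p + t • circleMap 0 1 θ • w) (I • circleMap 0 1 θ • w) := fun θ => by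
    rw [two_mul_dbar_apply]; ring
  simp_rw [hsplit]
  rw [intervalIntegral.integral_sub (by apply Continuous.intervalIntegrable; fun_prop)
      (by apply Continuous.intervalIntegrable; fun_prop),
    intervalIntegral.integral_const_mul, intervalIntegral.integral_const_mul,
    integral_fderiv_I_smul_circle_eq_zero p w hv ht, mul_zero, sub_zero]

theorem circleAverage_sub_eq_integral_dbar (hv : ContDiff ℝ 1 v) :
    circleAverage (fun ζ => v (p + ζ • w) - v p) 0 1 =
      π⁻¹ • ∫ t in 0..1, ∫ θ in 0..2 * π,
        dbar v (p + t • circleMap 0 1 θ • w) (circleMap 0 1 θ • w) := by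
  have := hv.continuous_fderiv one_ne_zero
  have := continuous_circleMap 0 1
  have hF : Continuous fun x : ℝ × ℝ =>
      fderiv ℝ v (p + x.1 • circleMap 0 1 x.2 • w) (circleMap 0 1 x.2 • w) := by
    fun_prop
  have hline : ∀ θ : ℝ, v (p + circleMap 0 1 θ • w) - v p =
      ∫ t in 0..1, fderiv ℝ v (p + t • circleMap 0 1 θ • w) (circleMap 0 1 θ • w) := fun θ => by
    rw [intervalIntegral.integral_eq_sub_of_hasDerivAt
      (fun t _ => hasDerivAt_polar_radius p w (hv.differentiable one_ne_zero) t θ)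
      ((hF.comp (Continuous.prodMk_left θ)).intervalIntegrable 0 1)]
    simp
  calc circleAverage (fun ζ => v (p + ζ • w) - v p) 0 1
      = (2 * π)⁻¹ • ∫ θ in 0..2 * π, ∫ t in 0..1,
          fderiv ℝ v (p + t • circleMap 0 1 θ • w) (circleMap 0 1 θ • w) := by
        simp only [circleAverage_def, hline]
    _ = (2 * π)⁻¹ • ∫ t in 0..1, ∫ θ in 0..2 * π,
          fderiv ℝ v (p + t • circleMap 0 1 θ • w) (circleMap 0 1 θ • w) := by
        rw [intervalIntegral_intervalIntegral_swap]
        exact (hF.comp continuous_swap).continuousOn.integrableOn_compact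
          (isCompact_uIcc.prod isCompact_uIcc) |>.mono_set
          (Set.prod_mono Set.uIoc_subset_uIcc Set.uIoc_subset_uIcc)
    _ = (2 * π)⁻¹ • ∫ t in 0..1, 2 * ∫ θ in 0..2 * π,
          dbar v (p + t • circleMap 0 1 θ • w) (circleMap 0 1 θ • w) := by
        congr 1
        refine intervalIntegral.integral_congr_ae (Filter.Eventually.of_forall fun t ht => ?_)
        rw [Set.uIoc_of_le zero_le_one] at ht
        exact integral_fderiv_circle_eq_two_mul_integral_dbar p w hv ht.1.ne'
    _ = _ := by
        simp only [intervalIntegral.integral_const_mul, Complex.real_smul]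
        push_cast
        ring

theorem norm_circleAverage_sub_le (hv : ContDiff ℝ 1 v) {M : ℝ}
    (hM : ∀ z ∈ closedBall p ‖w‖, ‖dbar v z‖ ≤ M) :
    ‖circleAverage (fun ζ => v (p + ζ • w) - v p) 0 1‖ ≤ 2 * ‖w‖ * M := by
  have hpointwise : ∀ t ∈ Set.uIoc (0 : ℝ) 1, ∀ θ : ℝ,
      ‖dbar v (p + t • circleMap 0 1 θ • w) (circleMap 0 1 θ • w)‖ ≤ M * ‖w‖ := by
    intro t ht θ
    rw [Set.uIoc_of_le zero_le_one] at ht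
    have hmem : p + t • circleMap 0 1 θ • w ∈ closedBall p ‖w‖ := by
      rw [mem_closedBall, dist_self_add_left, norm_smul, norm_smul, norm_circleMap_zero, abs_one,
        one_mul, Real.norm_of_nonneg ht.1.le]
      exact mul_le_of_le_one_left (norm_nonneg w) ht.2
    calc _ ≤ ‖dbar v (p + t • circleMap 0 1 θ • w)‖ * ‖circleMap 0 1 θ • w‖ :=
          ContinuousLinearMap.le_opNorm _ _
      _ = ‖dbar v (p + t • circleMap 0 1 θ • w)‖ * ‖w‖ := by
          rw [norm_smul, norm_circleMap_zero, abs_one, one_mul]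
      _ ≤ M * ‖w‖ := by gcongr; exact hM _ hmem
  rw [circleAverage_sub_eq_integral_dbar p w hv, norm_smul]
  calc ‖π⁻¹‖ * ‖∫ t in 0..1, ∫ θ in 0..2 * π,
          dbar v (p + t • circleMap 0 1 θ • w) (circleMap 0 1 θ • w)‖
      ≤ π⁻¹ * ((M * ‖w‖ * |2 * π - 0|) * |1 - 0|) := by
        rw [Real.norm_of_nonneg (by positivity)]
        gcongr
        refine intervalIntegral.norm_integral_le_of_norm_le_const fun t ht => ?_
        exact intervalIntegral.norm_integral_le_of_norm_le_const fun θ _ => hpointwise t ht θ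
    _ = 2 * ‖w‖ * M := by
        rw [sub_zero, sub_zero, abs_one, abs_of_pos (by positivity)]
        field_simp

end Circle

section Ball

variable (p : EuclideanSpace ℂ (Fin n)) {ε : ℝ}

theorem norm_setIntegral_ball_sub_le (hv : ContDiff ℝ 1 v) {M : ℝ} (hε : 0 ≤ ε)
    (hM : ∀ z ∈ closedBall p ε, ‖dbar v z‖ ≤ M) :
    ‖∫ z in ball p ε, (v z - v p)‖ ≤ 2 * ε * M * volume.real (ball p ε) := by
  have hM0 : 0 ≤ M := (norm_nonneg _).trans (hM p (mem_closedBall_self hε))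
  rw [← setIntegral_ball_zero_comp_add,
    ← setIntegral_ball_circleAverage_comp_smul (g := fun w => v (p + w) - v p) (by fun_prop),
    measureReal_def, Measure.addHaar_ball_center, ← measureReal_def]
  refine norm_setIntegral_le_of_norm_le_const measure_ball_lt_top fun w hw => ?_
  have hw : ‖w‖ ≤ ε := (mem_ball_zero_iff.mp hw).le
  calc _ ≤ 2 * ‖w‖ * M := norm_circleAverage_sub_le p w hv fun z hz =>
        hM z (closedBall_subset_closedBall hw hz)
    _ ≤ 2 * ε * M := by gcongr

theorem norm_setAverage_ball_sub_le (hv : ContDiff ℝ 1 v) {M : ℝ} (hε : 0 < ε)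
    (hM : ∀ z ∈ closedBall p ε, ‖dbar v z‖ ≤ M) :
    ‖(⨍ z in ball p ε, v z) - v p‖ ≤ 2 * ε * M := by
  have hvol : 0 < volume.real (ball p ε) :=
    ENNReal.toReal_pos (measure_ball_pos _ p hε).ne' measure_ball_lt_top.ne
  have hsub : (⨍ z in ball p ε, v z) - v p =
      (volume.real (ball p ε))⁻¹ • ∫ z in ball p ε, (v z - v p) := by
    rw [setAverage_eq, integral_sub (hv.continuous.integrableOn_ball p ε)
      (integrableOn_const measure_ball_lt_top.ne), setIntegral_const, smul_sub, smul_smul,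
      inv_mul_cancel₀ hvol.ne', one_smul]
  rw [hsub, norm_smul, Real.norm_of_nonneg (inv_nonneg.mpr hvol.le), inv_mul_le_iff₀ hvol,
    mul_comm]
  exact norm_setIntegral_ball_sub_le p hv hε.le hM

theorem norm_setAverage_ball_le (hv : Continuous v) (hε : 0 < ε) :
    ‖⨍ z in ball p ε, v z‖ ≤ (√(volume.real (ball (0 : EuclideanSpace ℂ (Fin n)) 1)))⁻¹ *
      (ε ^ (-(n : ℝ)) * (∫ z in ball p ε, ‖v z‖ ^ 2) ^ (1 / 2 : ℝ)) := by
  refine (norm_setAverage_le_sqrt_setAverage_norm_sq (measure_ball_pos _ p hε).ne'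
    measure_ball_lt_top.ne (hv.integrableOn_ball p ε) ?_).trans_eq ?_
  · exact Continuous.integrableOn_ball (by fun_prop) p ε
  rw [setAverage_eq, measureReal_ball_eq_pow_mul_measureReal_ball_one p hε, smul_eq_mul,
    Real.sqrt_mul', Real.sqrt_inv, Real.sqrt_mul', pow_mul', Real.sqrt_sq (by positivity),
    ← Real.sqrt_eq_rpow, Real.rpow_neg hε.le, Real.rpow_natCast, mul_inv]
  · ring
  · exact measureReal_nonneg
  · exact integral_nonneg fun _ => by positivity

end Ball

theorem pointwise_interior_dbar_estimate_general (n : ℕ) :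
    ∃ C > 0, ∀ (p : EuclideanSpace ℂ (Fin n)) (ε : ℝ), 0 < ε → ε ≤ 1 →
      ∀ v : EuclideanSpace ℂ (Fin n) → ℂ, ContDiff ℝ 1 v →
        ‖v p‖ ≤
          C * (ε * (⨆ z ∈ closedBall p ε, ‖dbar v z‖) +
            ε ^ (-(n : ℝ)) * (∫ z in ball p ε, ‖v z‖ ^ 2) ^ (1/2 : ℝ)) := by
  set V := volume.real (ball (0 : EuclideanSpace ℂ (Fin n)) 1)
  refine ⟨2 + (√V)⁻¹, by positivity, fun p ε hε _ v hv => ?_⟩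
  set M := ⨆ z ∈ closedBall p ε, ‖dbar v z‖
  set Q := ε ^ (-(n : ℝ)) * (∫ z in ball p ε, ‖v z‖ ^ 2) ^ (1/2 : ℝ)
  have hM : ∀ z ∈ closedBall p ε, ‖dbar v z‖ ≤ M := fun z hz =>
    (isCompact_closedBall p ε).le_biSup_of_continuousOn (continuous_dbar hv).norm.continuousOn hz
  have hεM : 0 ≤ ε * M :=
    mul_nonneg hε.le ((norm_nonneg _).trans (hM p (mem_closedBall_self hε.le)))
  have hQ : 0 ≤ Q := by positivity
  have hV : 0 ≤ (√V)⁻¹ := by positivity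
  calc ‖v p‖ ≤ ‖⨍ z in ball p ε, v z‖ + ‖(⨍ z in ball p ε, v z) - v p‖ := norm_le_insert _ _
    _ ≤ (√V)⁻¹ * Q + 2 * ε * M :=
        add_le_add (norm_setAverage_ball_le p hv.continuous hε)
          (norm_setAverage_ball_sub_le p hv hε hM)
    _ ≤ (2 + (√V)⁻¹) * (ε * M + Q) := by nlinarith

/-- Hörmander's pointwise interior estimate: for every `n ≥ 1` there is `C > 0` such that
for every `p ∈ ℂⁿ`, every `0 < ε ≤ 1` and every `C¹` function `v : ℂⁿ → ℂ`,
`|v(p)| ≤ C( ε·sup_{B̄(p,ε)} ‖∂̄v‖ + ε^{−n}·(∫_{B(p,ε)} |v|² dλ)^{1/2} )`. -/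
theorem pointwise_interior_dbar_estimate (n : ℕ) (hn : 1 ≤ n) :
    ∃ C > 0, ∀ (p : EuclideanSpace ℂ (Fin n)) (ε : ℝ), 0 < ε → ε ≤ 1 →
      ∀ v : EuclideanSpace ℂ (Fin n) → ℂ, ContDiff ℝ 1 v →
        ‖v p‖ ≤
          C * (ε * (⨆ z ∈ closedBall p ε, ‖dbar v z‖) +
            ε ^ (-(n : ℝ)) * (∫ z in ball p ε, ‖v z‖ ^ 2) ^ (1/2 : ℝ)) :=
  pointwise_interior_dbar_estimate_general n
end
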